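/- arXiv:1505.01452 — 2 statements merged into one kernel-verified Lean document; each statement's English description precedes it below -/
import Mathlib

section
/- Let c > 0 and let v(u) = (u² − 1 + √((u²−1)² + 4c²u²))/(2cu) for u ∈ (0,1). Then for every u ∈ (0,1): 1 − 3u²·v(u)² − u² − v(u)² > 0 if and only if 4c·u³ < (1−u²)^{3/2}·√(3u²+1), equivalently if and only if p(u) < 0 where p(x) = 3x⁸ + (16c²−8)x⁶ + 6x⁴ − 1 = (3x²+1)(x²−1)³ + 16c²x⁶. In particular, with u = cos θ₁ and c = m₁/m₂, the elliptic relative equilibrium is stable precisely when m₁/m₂ < sin³θ₁·√(3cos²θ₁+1)/(4cos³θ₁). -/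
/-!
`v = v(u)` is the positive root of `c u t² + (1 - u²) t - c u`, and on that curve
`c u F(u, v) = (3u² + 1)(1 - u²) v - 4 c u³`. So `F > 0` says that `4 c u³` lies below the
positive root of the rescaled quadratic in `s = (3u² + 1)(1 - u²) v`, i.e. that this quadratic
is negative at `4 c u³`; its value there is `-c u ((3u² + 1)(1 - u²)³ - 16 c² u⁶)`.
-/

open Real

theorem lt_root_iff_quadratic_neg {a b d t r : ℝ} (ha : 0 < a) (hb : 0 ≤ b) (ht : 0 ≤ t)
    (hr : 0 < r) (hroot : a * r ^ 2 + b * r + d = 0) :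
    t < r ↔ a * t ^ 2 + b * t + d < 0 := by
  have hfactor : a * t ^ 2 + b * t + d = (t - r) * (a * (t + r) + b) := by
    linear_combination hroot
  have hpos : 0 < a * (t + r) + b := by positivity
  rw [hfactor, ← sub_neg]
  exact ⟨fun h => mul_neg_of_neg_of_pos h hpos, fun h => neg_of_mul_neg_left h hpos.le⟩

/-- The cosine `v(u)` of the second particle's angle, as a function of `u = cos θ₁`. -/
noncomputable def partnerCos (c u : ℝ) : ℝ :=
  (u ^ 2 - 1 + √((u ^ 2 - 1) ^ 2 + 4 * c ^ 2 * u ^ 2)) / (2 * c * u)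

theorem partnerCos_pos {c u : ℝ} (hc : 0 < c) (hu : 0 < u) : 0 < partnerCos c u := by
  have hgt : |u ^ 2 - 1| < √((u ^ 2 - 1) ^ 2 + 4 * c ^ 2 * u ^ 2) := by
    rw [← sqrt_sq_eq_abs]
    exact sqrt_lt_sqrt (sq_nonneg _) (by nlinarith [mul_pos hc hu])
  exact div_pos (by linarith [neg_abs_le (u ^ 2 - 1)]) (by positivity)

theorem partnerCos_isRoot {c u : ℝ} (hc : 0 < c) (hu : 0 < u) :
    c * u * partnerCos c u ^ 2 + (1 - u ^ 2) * partnerCos c u - c * u = 0 := by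
  have hsq := sq_sqrt (by positivity : 0 ≤ (u ^ 2 - 1) ^ 2 + 4 * c ^ 2 * u ^ 2)
  unfold partnerCos
  generalize √((u ^ 2 - 1) ^ 2 + 4 * c ^ 2 * u ^ 2) = s at hsq ⊢
  field_simp
  linear_combination hsq

theorem stability_pos_iff {c u v : ℝ} (hc : 0 < c) (hu0 : 0 < u) (hu1 : u < 1) (hv : 0 < v)
    (hroot : c * u * v ^ 2 + (1 - u ^ 2) * v - c * u = 0) :
    0 < 1 - 3 * u ^ 2 * v ^ 2 - u ^ 2 - v ^ 2 ↔
      16 * c ^ 2 * u ^ 6 < (3 * u ^ 2 + 1) * (1 - u ^ 2) ^ 3 := by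
  set K := (3 * u ^ 2 + 1) * (1 - u ^ 2)
  have hcu : 0 < c * u := mul_pos hc hu0
  have hK : 0 < K := mul_pos (by positivity) (by nlinarith)
  have hF : c * u * (1 - 3 * u ^ 2 * v ^ 2 - u ^ 2 - v ^ 2) = K * v - 4 * c * u ^ 3 := by
    linear_combination (-(3 * u ^ 2 + 1)) * hroot
  have hscaled : c * u * (K * v) ^ 2 + (1 - u ^ 2) * K * (K * v) + -(c * u * K ^ 2) = 0 := by
    linear_combination K ^ 2 * hroot
  have hvalue : c * u * (4 * c * u ^ 3) ^ 2 + (1 - u ^ 2) * K * (4 * c * u ^ 3) + -(c * u * K ^ 2)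
      = -(c * u * ((3 * u ^ 2 + 1) * (1 - u ^ 2) ^ 3 - 16 * c ^ 2 * u ^ 6)) := by
    ring
  calc 0 < 1 - 3 * u ^ 2 * v ^ 2 - u ^ 2 - v ^ 2
      ↔ 4 * c * u ^ 3 < K * v := by rw [← mul_pos_iff_of_pos_left hcu, hF, sub_pos]
    _ ↔ -(c * u * ((3 * u ^ 2 + 1) * (1 - u ^ 2) ^ 3 - 16 * c ^ 2 * u ^ 6)) < 0 := by
      rw [← hvalue]
      exact lt_root_iff_quadratic_neg hcu (by nlinarith) (by positivity) (by positivity) hscaled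
    _ ↔ 16 * c ^ 2 * u ^ 6 < (3 * u ^ 2 + 1) * (1 - u ^ 2) ^ 3 := by
      rw [neg_lt_zero, mul_pos_iff_of_pos_left hcu, sub_pos]

theorem lt_rpow_three_halves_mul_sqrt_iff {a x y : ℝ} (ha : 0 ≤ a) (hx : 0 ≤ x)
    (hy : 0 ≤ y) :
    a < x ^ ((3 : ℝ) / 2) * √y ↔ a ^ 2 < x ^ 3 * y := by
  have hsq : (√x ^ 3 * √y) ^ 2 = x ^ 3 * y := by
    rw [mul_pow, ← pow_mul, mul_comm 3, pow_mul, sq_sqrt hx, sq_sqrt hy]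
  rw [rpow_div_two_eq_sqrt _ hx, rpow_ofNat, ← hsq,
    pow_lt_pow_iff_left₀ ha (by positivity) two_ne_zero]

theorem sin_pow_three_eq_one_sub_cos_sq_rpow {θ : ℝ} (h0 : 0 ≤ θ) (hπ : θ ≤ π) :
    sin θ ^ 3 = (1 - cos θ ^ 2) ^ ((3 : ℝ) / 2) := by
  rw [rpow_div_two_eq_sqrt _ (by nlinarith [cos_sq_le_one θ]), rpow_ofNat,
    ← sin_eq_sqrt_one_sub_cos_sq h0 hπ]

/-- For a mass ratio `c > 0` and
`v(u) = (u² - 1 + √((u²-1)² + 4c²u²))/(2cu)` on `(0,1)`, the stability quantity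
`F(u, v(u)) = 1 - 3u²v(u)² - u² - v(u)²` is positive iff `4cu³ < (1-u²)^{3/2}√(3u²+1)`,
equivalently iff `p(u) < 0` where
`p(x) = 3x⁸ + (16c²-8)x⁶ + 6x⁴ - 1 = (3x²+1)(x²-1)³ + 16c²x⁶`. In particular, with
`u = cos θ₁` and `c = m₁/m₂`, the elliptic relative equilibrium is stable precisely when
`m₁/m₂ < sin³θ₁ √(3cos²θ₁+1) / (4cos³θ₁)`. -/
theorem stability_criterion_for_elliptic_relative_equilibria
    (c : ℝ) (hc : 0 < c) (v : ℝ → ℝ)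
    (hv : ∀ u ∈ Set.Ioo (0 : ℝ) 1,
      v u = (u ^ 2 - 1 + Real.sqrt ((u ^ 2 - 1) ^ 2 + 4 * c ^ 2 * u ^ 2)) / (2 * c * u)) :
    (∀ x : ℝ, 3 * x ^ 8 + (16 * c ^ 2 - 8) * x ^ 6 + 6 * x ^ 4 - 1 =
      (3 * x ^ 2 + 1) * (x ^ 2 - 1) ^ 3 + 16 * c ^ 2 * x ^ 6) ∧
    (∀ u ∈ Set.Ioo (0 : ℝ) 1,
      (0 < 1 - 3 * u ^ 2 * (v u) ^ 2 - u ^ 2 - (v u) ^ 2 ↔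
        4 * c * u ^ 3 < (1 - u ^ 2) ^ ((3 : ℝ) / 2) * Real.sqrt (3 * u ^ 2 + 1)) ∧
      (0 < 1 - 3 * u ^ 2 * (v u) ^ 2 - u ^ 2 - (v u) ^ 2 ↔
        3 * u ^ 8 + (16 * c ^ 2 - 8) * u ^ 6 + 6 * u ^ 4 - 1 < 0)) ∧
    (∀ θ₁ ∈ Set.Ioo 0 (π / 2),
      (0 < 1 - 3 * Real.cos θ₁ ^ 2 * (v (Real.cos θ₁)) ^ 2 - Real.cos θ₁ ^ 2 -
          (v (Real.cos θ₁)) ^ 2 ↔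
        c < Real.sin θ₁ ^ 3 * Real.sqrt (3 * Real.cos θ₁ ^ 2 + 1) /
          (4 * Real.cos θ₁ ^ 3))) := by
  have hF : ∀ u ∈ Set.Ioo (0 : ℝ) 1, 0 < 1 - 3 * u ^ 2 * (v u) ^ 2 - u ^ 2 - (v u) ^ 2 ↔
      16 * c ^ 2 * u ^ 6 < (3 * u ^ 2 + 1) * (1 - u ^ 2) ^ 3 := by
    rintro u ⟨hu0, hu1⟩
    rw [show v u = partnerCos c u from hv u ⟨hu0, hu1⟩]
    exact stability_pos_iff hc hu0 hu1 (partnerCos_pos hc hu0) (partnerCos_isRoot hc hu0)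
  have hsqrt : ∀ u ∈ Set.Ioo (0 : ℝ) 1,
      4 * c * u ^ 3 < (1 - u ^ 2) ^ ((3 : ℝ) / 2) * √(3 * u ^ 2 + 1) ↔
        16 * c ^ 2 * u ^ 6 < (3 * u ^ 2 + 1) * (1 - u ^ 2) ^ 3 := by
    rintro u ⟨hu0, hu1⟩
    rw [lt_rpow_three_halves_mul_sqrt_iff (by positivity) (by nlinarith) (by positivity),
      mul_comm ((1 - u ^ 2) ^ 3)]
    ring_nf
  refine ⟨fun x => by ring, fun u hu => ⟨(hF u hu).trans (hsqrt u hu).symm, ?_⟩, ?_⟩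
  · rw [hF u hu, ← sub_neg]
    ring_nf
  · rintro θ ⟨hθ0, hθ1⟩
    have hcos0 : 0 < cos θ := cos_pos_of_mem_Ioo ⟨by linarith [pi_pos], hθ1⟩
    have hcos1 : cos θ < 1 := by
      simpa using cos_lt_cos_of_nonneg_of_le_pi le_rfl (by linarith [pi_pos]) hθ0
    rw [lt_div_iff₀ (by positivity), mul_left_comm, ← mul_assoc,
      sin_pow_three_eq_one_sub_cos_sq_rpow hθ0.le (by linarith [pi_pos]),
      hF _ ⟨hcos0, hcos1⟩, hsqrt _ ⟨hcos0, hcos1⟩]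
end

section
/- For t ∈ ℝ let R_t = [[cos(t/2), −sin(t/2)], [sin(t/2), cos(t/2)]] ∈ SL(2,ℝ), let ω ≠ 0, θ ∈ (0, π/2), z = cos θ + i·sin θ ∈ ℍ, and define γ : ℝ → ℍ by γ(t) = R_{ωt}•z. Then: (i) R_t•i = i for all t (the hyperbolic center of mass stays fixed); (ii) γ(t + 2π/ω) = γ(t) for all t (the motion is periodic with period 2π/|ω|); (iii) dist(γ(t), γ(0))/|t| → |ω|·cos θ/sin θ as t → 0 (t ≠ 0), i.e. the particle moves with constant hyperbolic speed |ω|·cos θ/sin θ = |ω|·sinh(d), where d = dist(i, z). -/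
/-!
`R_t` is the hyperbolic rotation by the angle `t` about `i`: it fixes `i`, and `R_{t+2π} = -R_t`
acts as `R_t`. For every `w ∈ ℍ` the Möbius formula gives
`R_t • w - w = -sin(t/2) (1 + w²) / (sin(t/2) w + cos(t/2))` and
`Im (R_t • w) = Im w / |sin(t/2) w + cos(t/2)|²`, hence
`sinh (dist (R_t • w) w / 2) = |sin(t/2)| |1 + w²| / (2 Im w) = |sin(t/2)| sinh (dist i w)`.
So `dist (γ t) (γ 0) = |2 arsinh (sinh d · sin(ωt/2))|` with `d = dist i z`, a function whose
derivative at `0` has absolute value `|ω| sinh d`; on the unit circle `sinh d = cos θ / sin θ`.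
-/

open Real Filter Topology
open scoped UpperHalfPlane MatrixGroups

theorem Real.abs_arsinh (x : ℝ) : |arsinh x| = arsinh |x| := by
  rcases le_or_gt 0 x with hx | hx
  · rw [abs_of_nonneg hx, abs_of_nonneg (arsinh_nonneg_iff.2 hx)]
  · rw [abs_of_neg hx, abs_of_neg (arsinh_neg_iff.2 hx), arsinh_neg]

theorem HasDerivAt.tendsto_abs_div_abs {f : ℝ → ℝ} {f' : ℝ} (hf : HasDerivAt f f' 0)
    (h0 : f 0 = 0) : Tendsto (fun t => |f t| / |t|) (𝓝[≠] 0) (𝓝 |f'|) := by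
  refine (hasDerivAt_iff_tendsto_slope.1 hf).abs.congr fun t => ?_
  rw [slope_def_field, h0, sub_zero, sub_zero, abs_div]

theorem Complex.norm_one_add_sq_of_norm_eq_one {z : ℂ} (hz : ‖z‖ = 1) :
    ‖1 + z ^ 2‖ = 2 * |z.re| := by
  have hconj : z * (starRingEnd ℂ) z = 1 := by
    rw [Complex.mul_conj, Complex.normSq_eq_norm_sq, hz]; simp
  have hfactor : 1 + z ^ 2 = z * (2 * z.re) := by
    rw [Complex.re_eq_add_conj]; linear_combination -hconj
  rw [hfactor, norm_mul, hz, one_mul, norm_mul, Complex.norm_two, Complex.norm_real,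
    Real.norm_eq_abs]

namespace UpperHalfPlane

theorem sinh_dist_I (z : ℍ) : sinh (dist I z) = ‖1 + (z : ℂ) ^ 2‖ / (2 * z.im) := by
  have hz := z.im_pos
  refine (sq_eq_sq₀ (sinh_nonneg_iff.2 dist_nonneg) (by positivity)).1 ?_
  rw [sinh_sq, cosh_dist, Complex.dist_eq, div_pow, Complex.sq_norm, Complex.sq_norm, I_im,
    mul_one]
  field_simp
  simp only [Complex.normSq_apply, coe_I, Complex.sub_re, Complex.sub_im, Complex.add_re,
    Complex.add_im, Complex.one_re, Complex.one_im, Complex.I_re, Complex.I_im, pow_two,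
    Complex.mul_re, Complex.mul_im, coe_re, coe_im]
  ring

theorem sinh_dist_I_of_norm_eq_one {z : ℍ} (hz : ‖(z : ℂ)‖ = 1) :
    sinh (dist I z) = |z.re| / z.im := by
  have := z.im_pos
  rw [sinh_dist_I, Complex.norm_one_add_sq_of_norm_eq_one hz, coe_re]
  field_simp

theorem specialLinearGroup_neg_smul (g : SL(2, ℝ)) (z : ℍ) : -g • z = g • z := by
  rw [MulAction.compHom_smul_def, MulAction.compHom_smul_def, ← UpperHalfPlane.neg_smul]
  congr 1
  ext i j
  simp [Matrix.SpecialLinearGroup.mapGL_coe_matrix]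

section Rotation

variable {g : SL(2, ℝ)} {c s : ℝ}

theorem denom_ne_zero_of_eq_rotation (hg : (g : Matrix (Fin 2) (Fin 2) ℝ) = !![c, -s; s, c])
    (w : ℍ) : (s : ℂ) * w + c ≠ 0 := by
  simpa [denom, hg] using denom_ne_zero g w

theorem coe_smul_of_eq_rotation (hg : (g : Matrix (Fin 2) (Fin 2) ℝ) = !![c, -s; s, c])
    (w : ℍ) : ((g • w : ℍ) : ℂ) = (c * w - s) / (s * w + c) := by
  simp [coe_specialLinearGroup_apply, hg, sub_eq_add_neg]

theorem smul_I_of_eq_rotation (hg : (g : Matrix (Fin 2) (Fin 2) ℝ) = !![c, -s; s, c]) :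
    g • I = I := by
  ext1
  rw [coe_smul_of_eq_rotation hg, div_eq_iff (denom_ne_zero_of_eq_rotation hg I), coe_I]
  linear_combination (-s : ℂ) * Complex.I_sq

theorem coe_smul_sub_self_of_eq_rotation
    (hg : (g : Matrix (Fin 2) (Fin 2) ℝ) = !![c, -s; s, c]) (w : ℍ) :
    ((g • w : ℍ) : ℂ) - w = -s * (1 + (w : ℂ) ^ 2) / (s * w + c) := by
  rw [coe_smul_of_eq_rotation hg, div_sub' (denom_ne_zero_of_eq_rotation hg w)]
  ring_nf

theorem im_smul_of_eq_rotation (hg : (g : Matrix (Fin 2) (Fin 2) ℝ) = !![c, -s; s, c])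
    (w : ℍ) : (g • w).im = w.im / ‖(s : ℂ) * w + c‖ ^ 2 := by
  rw [MulAction.compHom_smul_def, im_smul_eq_div_normSq, Matrix.SpecialLinearGroup.det_mapGL]
  simp [denom, Matrix.SpecialLinearGroup.mapGL_coe_matrix, hg, Complex.normSq_eq_norm_sq]

theorem sinh_half_dist_smul_self_of_eq_rotation
    (hg : (g : Matrix (Fin 2) (Fin 2) ℝ) = !![c, -s; s, c]) (w : ℍ) :
    sinh (dist (g • w) w / 2) = |s| * sinh (dist I w) := by
  have hw := w.im_pos
  have hden : 0 < ‖(s : ℂ) * w + c‖ := norm_pos_iff.2 (denom_ne_zero_of_eq_rotation hg w)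
  have hsqrt : √((g • w).im * w.im) = w.im / ‖(s : ℂ) * w + c‖ := by
    rw [im_smul_of_eq_rotation hg,
      ← Real.sqrt_sq (by positivity : 0 ≤ w.im / ‖(s : ℂ) * w + c‖)]
    ring_nf
  rw [sinh_half_dist, hsqrt, Complex.dist_eq, coe_smul_sub_self_of_eq_rotation hg, sinh_dist_I,
    norm_div, norm_mul, norm_neg, Complex.norm_real, Real.norm_eq_abs]
  generalize ‖(s : ℂ) * w + c‖ = N at hden ⊢
  field_simp

theorem dist_smul_self_of_eq_rotation (hg : (g : Matrix (Fin 2) (Fin 2) ℝ) = !![c, -s; s, c])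
    (w : ℍ) : dist (g • w) w = |2 * arsinh (sinh (dist I w) * s)| := by
  have hsinh : 0 ≤ sinh (dist I w) := sinh_nonneg_iff.2 dist_nonneg
  rw [abs_mul, abs_two, Real.abs_arsinh, abs_mul, abs_of_nonneg hsinh, mul_comm _ |s|,
    ← sinh_half_dist_smul_self_of_eq_rotation hg, arsinh_sinh]
  ring

end Rotation

end UpperHalfPlane

theorem rotation_add_two_pi {R : ℝ → SL(2, ℝ)}
    (hR : ∀ t : ℝ, (R t : Matrix (Fin 2) (Fin 2) ℝ) =
      !![cos (t / 2), -sin (t / 2); sin (t / 2), cos (t / 2)])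
    (t : ℝ) : R (t + 2 * π) = -R t := by
  apply Subtype.ext
  rw [Matrix.SpecialLinearGroup.coe_neg, hR, hR, add_div, mul_div_cancel_left₀ π two_ne_zero,
    cos_add_pi, sin_add_pi]
  ext i j
  fin_cases i <;> fin_cases j <;> simp

/-- For the rotations `R_t = !![cos(t/2), -sin(t/2); sin(t/2), cos(t/2)]`
in `SL(2,ℝ)`, `ω ≠ 0`, `θ ∈ (0, π/2)`, `z = cos θ + i sin θ ∈ ℍ` and the elliptic
relative-equilibrium curve `γ(t) = R_{ωt} • z`: (i) `R_t • i = i` for all `t` (the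
hyperbolic center of mass stays fixed); (ii) `γ(t + 2π/ω) = γ(t)` for all `t` (the motion
is periodic with period `2π/|ω|`); (iii) `dist(γ(t), γ(0))/|t| → |ω| cos θ / sin θ` as
`t → 0`, i.e. the particle moves with constant hyperbolic speed
`|ω| cos θ / sin θ = |ω| sinh d`, where `d = dist(i, z)`. -/
theorem elliptic_relative_equilibrium_intrinsic_description
    (R : ℝ → Matrix.SpecialLinearGroup (Fin 2) ℝ)
    (hR : ∀ t : ℝ, (R t : Matrix (Fin 2) (Fin 2) ℝ) =
      !![Real.cos (t / 2), -Real.sin (t / 2); Real.sin (t / 2), Real.cos (t / 2)])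
    (ω θ : ℝ) (hω : ω ≠ 0) (hθ : θ ∈ Set.Ioo 0 (π / 2))
    (z : UpperHalfPlane) (hz : (z : ℂ) = ⟨Real.cos θ, Real.sin θ⟩)
    (γ : ℝ → UpperHalfPlane) (hγ : ∀ t : ℝ, γ t = R (ω * t) • z) :
    (∀ t : ℝ, R t • UpperHalfPlane.I = UpperHalfPlane.I) ∧
    (∀ t : ℝ, γ (t + 2 * π / ω) = γ t) ∧
    Tendsto (fun t : ℝ => dist (γ t) (γ 0) / |t|) (𝓝[≠] 0)
      (𝓝 (|ω| * Real.cos θ / Real.sin θ)) ∧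
    |ω| * Real.cos θ / Real.sin θ = |ω| * Real.sinh (dist UpperHalfPlane.I z) := by
  have hcos : 0 < cos θ := cos_pos_of_mem_Ioo ⟨by linarith [hθ.1, pi_pos], hθ.2⟩
  have hspeed : sinh (dist UpperHalfPlane.I z) = cos θ / sin θ := by
    have hnorm : ‖(z : ℂ)‖ = 1 := by
      rw [hz, Complex.norm_def, Complex.normSq_mk, ← sq, ← sq, cos_sq_add_sin_sq, sqrt_one]
    rw [UpperHalfPlane.sinh_dist_I_of_norm_eq_one hnorm, ← UpperHalfPlane.coe_re,
      ← UpperHalfPlane.coe_im, hz, abs_of_pos hcos]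
  have hγ0 : γ 0 = z := by
    ext1
    simp [hγ, UpperHalfPlane.coe_smul_of_eq_rotation (hR 0)]
  set k := sinh (dist UpperHalfPlane.I z)
  have hderiv : HasDerivAt (fun t => 2 * arsinh (k * sin (ω * t / 2))) (k * ω) 0 := by
    refine ((((hasDerivAt_id' 0).const_mul ω).div_const 2).sin.const_mul k).arsinh.const_mul 2
      |>.congr_deriv ?_
    simp [field]
  refine ⟨fun t => UpperHalfPlane.smul_I_of_eq_rotation (hR t), fun t => ?_, ?_,
    by rw [hspeed]; ring⟩
  · rw [hγ, hγ, mul_add, mul_div_cancel₀ _ hω, rotation_add_two_pi hR,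
      UpperHalfPlane.specialLinearGroup_neg_smul]
  · have hlim : |k * ω| = |ω| * cos θ / sin θ := by
      rw [abs_mul, abs_of_nonneg (by positivity), hspeed]; ring
    have hdist (t : ℝ) : dist (γ t) (γ 0) = |2 * arsinh (k * sin (ω * t / 2))| := by
      rw [hγ0, hγ, UpperHalfPlane.dist_smul_self_of_eq_rotation (hR _)]
    simp only [hdist, ← hlim]
    exact hderiv.tendsto_abs_div_abs (by simp)
end
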